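/- Least-resolved trees explaining (δ, ε) subject to constraints (C1) and (C2) are not unique in general: there is a doubly labeled tree (T, t, λ) explaining some (δ, ε) and satisfying (C1) and (C2), containing consecutive inner edges uv and vw with t(u)=t(v)=t(w), λ({u,v}) = λ({v,w}) = ∅, such that contracting either one of uv, vw preserves explanation of (δ,ε) and conditions (C1),(C2), but contracting both does not. -/

import Mathlib

/-- A rooted phylogenetic tree with leaf set `L`: a finite vertex type `V`,
a root, a parent map (the root is its own parent), every vertex reaches the
root by iterating `parent`, the leaves are exactly the vertices without
children and are in bijection with `L`, and every inner vertex has at least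
two children. -/
structure PhyloTree (L : Type) : Type 1 where
  V : Type
  fintypeV : Fintype V
  root : V
  parent : V → V
  leaf : L → V
  parent_root : parent root = root
  reach : ∀ v : V, ∃ n : ℕ, parent^[n] v = root
  leaf_inj : Function.Injective leaf
  leaf_iff : ∀ v : V, (∀ u : V, parent u = v → u = v) ↔ ∃ x : L, leaf x = v
  phylo : ∀ v : V, (¬ ∃ x : L, leaf x = v) →
      ∃ u u' : V, u ≠ u' ∧ parent u = v ∧ parent u' = v ∧ u ≠ v ∧ u' ≠ v

namespace PhyloTree

variable {L : Type} (T : PhyloTree L)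

/-- `v` is an ancestor (or equal) of `w`. -/
def anc (v w : T.V) : Prop := ∃ n : ℕ, T.parent^[n] w = v

def isLeaf (v : T.V) : Prop := ∃ x : L, T.leaf x = v

/-- The cluster `L(T(v))`: the set of leaves below `v`. -/
def cluster (v : T.V) : Set L := {x : L | T.anc v (T.leaf x)}

/-- The cluster system `H(T)`. -/
def clusters : Set (Set L) := Set.range T.cluster

/-- `w` is the last common ancestor of the leaves `x` and `y`. -/
def isLCA (x y : L) (w : T.V) : Prop :=
  T.anc w (T.leaf x) ∧ T.anc w (T.leaf y) ∧
    ∀ u : T.V, T.anc u (T.leaf x) → T.anc u (T.leaf y) → T.anc u w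

/-- `u` is a child of `v`. -/
def childOf (u v : T.V) : Prop := T.parent u = v ∧ u ≠ v

/-- The edge `{parent u, u}` (encoded by its lower endpoint `u`) is an inner edge. -/
def innerEdge (u : T.V) : Prop := T.parent u ≠ u ∧ ¬ T.isLeaf u

/-- The edge `{parent u, u}` lies on the path from the vertex `w` down to the leaf `y`. -/
def onPath (w : T.V) (y : L) (u : T.V) : Prop :=
  T.anc w u ∧ u ≠ w ∧ T.anc u (T.leaf y)

/-- The vertex-labeled tree `(T,t)` explains `δ`. -/
def ExplainsDelta {M : Type} (t : T.V → M) (δ : L → L → M) : Prop :=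
  ∀ x y : L, x ≠ y → ∀ w : T.V, T.isLCA x y w → t w = δ x y

/-- The edge-labeled tree `(T,λ)` explains `ε`; edge labels are encoded on the
lower endpoint of each edge. -/
def ExplainsEps {N : Type} (lam : T.V → Finset N) (ε : L → L → Finset N) : Prop :=
  ∀ x y : L, x ≠ y → ∀ w : T.V, T.isLCA x y w →
    ∀ k : N, k ∈ ε x y ↔ ∃ u : T.V, T.onPath w y u ∧ k ∈ lam u

/-- The vertex labeling is discriminating: the endpoints of every inner edge
carry distinct labels. -/
def Discriminating {M : Type} (t : T.V → M) : Prop :=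
  ∀ u : T.V, T.innerEdge u → t u ≠ t (T.parent u)

/-- Total number of labels over all edges, `Σ_{e ∈ E(T)} |λ(e)|`. -/
noncomputable def labelSum {N : Type} (lam : T.V → Finset N) : ℕ :=
  letI := T.fintypeV
  letI := Classical.decEq T.V
  ∑ v : T.V, if T.parent v = v then 0 else (lam v).card

/-- Condition (C): every inner vertex has a child joined by an empty-labeled edge. -/
def CondC {N : Type} (lam : T.V → Finset N) : Prop :=
  ∀ v : T.V, ¬ T.isLeaf v → ∃ u : T.V, T.childOf u v ∧ lam u = ∅

/-- Condition (C1): if `t(v) ∈ M₀` then all edges from `v` to its children are empty. -/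
def CondC1 {M N : Type} (t : T.V → M) (lam : T.V → Finset N) (M0 : Set M) : Prop :=
  ∀ v u : T.V, T.childOf u v → t v ∈ M0 → lam u = ∅

/-- Condition (C2): at every vertex, at most one edge to a child is nonempty. -/
def CondC2 {N : Type} (lam : T.V → Finset N) : Prop :=
  ∀ v u u' : T.V, T.childOf u v → T.childOf u' v → lam u ≠ ∅ → lam u' ≠ ∅ → u = u'

/-- `(T1,λ1) ≤ (T2,λ2)`: the edge-labeled tree `(T2,λ2)` refines `(T1,λ1)`. -/
def LeLabeled {N : Type} (T1 : PhyloTree L) (lam1 : T1.V → Finset N)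
    (T2 : PhyloTree L) (lam2 : T2.V → Finset N) : Prop :=
  T1.clusters ⊆ T2.clusters ∧
    ∀ (v1 : T1.V) (v2 : T2.V), T1.parent v1 ≠ v1 → T2.parent v2 ≠ v2 →
      T1.cluster v1 = T2.cluster v2 → lam1 v1 ⊆ lam2 v2

/-- `φ` witnesses that `T'` is obtained from `T` by contracting the inner edge
`{parent u, u}`. -/
def IsContractionMap (T : PhyloTree L) (u : T.V) (T' : PhyloTree L)
    (φ : T.V → T'.V) : Prop :=
  T.innerEdge u ∧ Function.Surjective φ ∧ φ u = φ (T.parent u) ∧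
    (∀ a b : T.V, φ a = φ b →
      a = b ∨ (a = u ∧ b = T.parent u) ∨ (b = u ∧ a = T.parent u)) ∧
    (∀ v : T.V, v ≠ u → T'.parent (φ v) = φ (T.parent v)) ∧
    (∀ x : L, φ (T.leaf x) = T'.leaf x) ∧ φ T.root = T'.root

/-- `T'` is obtained from `T` by contracting the inner edge `{parent u, u}`. -/
def ContractEdge (T : PhyloTree L) (u : T.V) (T' : PhyloTree L) : Prop :=
  ∃ φ : T.V → T'.V, IsContractionMap T u T' φ

/-- Isomorphism of rooted trees on the same leaf set. -/
def Isomorphic (T1 T2 : PhyloTree L) : Prop :=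
  ∃ φ : T1.V ≃ T2.V, (∀ v : T1.V, φ (T1.parent v) = T2.parent (φ v)) ∧
    ∀ x : L, φ (T1.leaf x) = T2.leaf x

def IsSymbolicUltrametric {M : Type} (δ : L → L → M) : Prop :=
  ∃ (T : PhyloTree L) (t : T.V → M), T.ExplainsDelta t δ

def IsFitchMap {N : Type} (ε : L → L → Finset N) : Prop :=
  ∃ (T : PhyloTree L) (lam : T.V → Finset N), T.ExplainsEps lam ε

def TreeLike {M N : Type} (δ : L → L → M) (ε : L → L → Finset N) : Prop :=
  ∃ (T : PhyloTree L) (t : T.V → M) (lam : T.V → Finset N),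
    T.ExplainsDelta t δ ∧ T.ExplainsEps lam ε

def MTreeLike {M N : Type} (δ : L → L → M) (ε : L → L → Finset N) (M0 : Set M) : Prop :=
  ∃ (T : PhyloTree L) (t : T.V → M) (lam : T.V → Finset N),
    T.ExplainsDelta t δ ∧ T.ExplainsEps lam ε ∧ T.CondC lam ∧ T.CondC1 t lam M0

end PhyloTree

/-- A hierarchy on `L`. -/
def IsHierarchy {L : Type} (H : Set (Set L)) : Prop :=
  Set.univ ∈ H ∧ (∀ x : L, {x} ∈ H) ∧
    (∀ A ∈ H, ∀ B ∈ H, A ∩ B = A ∨ A ∩ B = B ∨ A ∩ B = (∅ : Set L)) ∧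
    (∅ : Set L) ∉ H

/-! The example has leaves `a, b, c, d` (encoded as `0, 1, 2, 3`), the constant vertex labeling,
and the single edge label `()` placed on the pendant edges of `a` and `c`.  Pendant labels
explain `ε(x, y) = f(y)` on every tree, and they satisfy (C2) exactly when `a` and `c` are not
siblings.  In the caterpillar `(a,(b,(c,d)))` and in both one-edge contractions `(a,b,(c,d))`
and `(a,(b,c,d))` they are not.  Removing both inner clusters leaves only trivial clusters, so the
tree is a star; there every edge separating `y` from some other leaf is the pendant edge of `y`,
so `ε` forces labels on the pendant edges of the siblings `a` and `c`, contradicting (C2). -/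

namespace PhyloTree

variable {L : Type} {T : PhyloTree L}

instance [Fintype L] [DecidableEq T.V] (v : T.V) : Decidable (T.isLeaf v) :=
  inferInstanceAs (Decidable (∃ x, T.leaf x = v))

instance [DecidableEq T.V] (u v : T.V) : Decidable (T.childOf u v) :=
  inferInstanceAs (Decidable (_ ∧ _))

theorem anc_refl (v : T.V) : T.anc v v := ⟨0, rfl⟩

theorem anc_root (v : T.V) : T.anc T.root v := T.reach v

theorem anc_trans {a b c : T.V} (hab : T.anc a b) (hbc : T.anc b c) : T.anc a c := by
  obtain ⟨m, rfl⟩ := hab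
  obtain ⟨n, rfl⟩ := hbc
  exact ⟨m + n, Function.iterate_add_apply _ _ _ _⟩

theorem anc_parent_of_anc_of_ne {a b : T.V} (h : T.anc a b) (hne : a ≠ b) :
    T.anc a (T.parent b) := by
  obtain ⟨_ | k, rfl⟩ := h
  · exact absurd rfl hne
  · exact ⟨k, (Function.iterate_succ_apply _ _ _).symm⟩

theorem eq_root_of_parent_eq {v : T.V} (h : T.parent v = v) : v = T.root := by
  obtain ⟨n, hn⟩ := T.reach v
  rwa [Function.iterate_fixed h] at hn

theorem eq_root_of_isPeriodicPt {p : ℕ} {v : T.V} (h : Function.IsPeriodicPt T.parent p v)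
    (hp : 0 < p) : v = T.root := by
  obtain ⟨n, hn⟩ := T.reach v
  calc v = T.parent^[(n * p - n) + n] v := by
        rw [Nat.sub_add_cancel (Nat.le_mul_of_pos_right n hp)]; exact (h.const_mul n).eq.symm
    _ = T.root := by rw [Function.iterate_add_apply, hn, Function.iterate_fixed T.parent_root]

theorem anc_antisymm {a b : T.V} (hab : T.anc a b) (hba : T.anc b a) : a = b := by
  obtain ⟨m, hm⟩ := hab
  obtain ⟨n, hn⟩ := hba
  rcases Nat.eq_zero_or_pos (m + n) with h | h
  · rw [← hm, show m = 0 by omega]; rfl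
  · have ha : a = T.root := eq_root_of_isPeriodicPt
      (show T.parent^[m + n] a = a by rw [Function.iterate_add_apply, hn, hm]) h
    rw [← hn, ha, Function.iterate_fixed T.parent_root]

theorem anc_total_of_anc {a b c : T.V} (hac : T.anc a c) (hbc : T.anc b c) :
    T.anc a b ∨ T.anc b a := by
  obtain ⟨m, rfl⟩ := hac
  obtain ⟨n, rfl⟩ := hbc
  rcases le_total m n with h | h
  · exact Or.inr ⟨n - m, by rw [← Function.iterate_add_apply, Nat.sub_add_cancel h]⟩
  · exact Or.inl ⟨m - n, by rw [← Function.iterate_add_apply, Nat.sub_add_cancel h]⟩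

theorem eq_of_leaf_anc {x : L} {v : T.V} (h : T.anc (T.leaf x) v) : v = T.leaf x := by
  obtain ⟨n, hn⟩ := h
  induction n with
  | zero => exact hn
  | succ n ih =>
    rw [Function.iterate_succ_apply'] at hn
    exact ih ((T.leaf_iff _).mpr ⟨x, rfl⟩ _ hn)

theorem not_isLeaf_of_childOf {u v : T.V} (h : T.childOf u v) : ¬ T.isLeaf v :=
  fun hv => h.2 ((T.leaf_iff v).mpr hv u h.1)

theorem eq_of_childOf_of_anc {c d v : T.V} (hc : T.childOf c v) (hd : T.childOf d v)
    (h : T.anc c d) : c = d := by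
  by_contra hne
  have hcv : T.anc c v := hd.1 ▸ anc_parent_of_anc_of_ne h hne
  exact hc.2 (anc_antisymm hcv ⟨1, hc.1⟩)

theorem exists_childOf_anc {v w : T.V} (h : T.anc v w) (hne : w ≠ v) :
    ∃ c, T.childOf c v ∧ T.anc c w := by
  obtain ⟨n, hn⟩ := h
  induction n with
  | zero => exact absurd hn hne
  | succ n ih =>
    rw [Function.iterate_succ_apply'] at hn
    by_cases hc : T.parent^[n] w = v
    · exact ih hc
    · exact ⟨_, ⟨hn, hc⟩, n, rfl⟩

/-- `a` is a proper descendant of `b`. -/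
def ProperDesc (T : PhyloTree L) (a b : T.V) : Prop := T.anc b a ∧ a ≠ b

theorem wellFounded_properDesc : WellFounded T.ProperDesc := by
  have := T.fintypeV
  have : IsTrans T.V T.ProperDesc := ⟨fun a b c ⟨hba, hab⟩ ⟨hcb, _⟩ =>
    ⟨anc_trans hcb hba, fun hac => hab (anc_antisymm (hac ▸ hcb) hba)⟩⟩
  have : Std.Irrefl T.ProperDesc := ⟨fun _ h => h.2 rfl⟩
  exact Finite.wellFounded_of_trans_of_irrefl _

theorem cluster_leaf (x : L) : T.cluster (T.leaf x) = {x} := by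
  ext y
  exact ⟨fun h => T.leaf_inj (eq_of_leaf_anc h), fun h => h ▸ anc_refl _⟩

theorem cluster_root : T.cluster T.root = Set.univ :=
  Set.eq_univ_of_forall fun _ => anc_root _

theorem cluster_nonempty (v : T.V) : (T.cluster v).Nonempty := by
  induction v using wellFounded_properDesc.induction with
  | _ v ih =>
    by_cases hv : T.isLeaf v
    · obtain ⟨x, rfl⟩ := hv
      exact ⟨x, anc_refl _⟩
    · obtain ⟨u, -, -, hu, -, huv, -⟩ := T.phylo v hv
      obtain ⟨x, hx⟩ := ih u ⟨⟨1, hu⟩, huv⟩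
      exact ⟨x, anc_trans ⟨1, hu⟩ hx⟩

theorem cluster_nontrivial {v : T.V} (hv : ¬ T.isLeaf v) : (T.cluster v).Nontrivial := by
  obtain ⟨u, u', hne, hu, hu', huv, hu'v⟩ := T.phylo v hv
  obtain ⟨x, hx⟩ := cluster_nonempty u
  obtain ⟨y, hy⟩ := cluster_nonempty u'
  refine ⟨x, anc_trans ⟨1, hu⟩ hx, y, anc_trans ⟨1, hu'⟩ hy, ?_⟩
  rintro rfl
  rcases anc_total_of_anc hx hy with h | h
  · exact hne (eq_of_childOf_of_anc ⟨hu, huv⟩ ⟨hu', hu'v⟩ h)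
  · exact hne (eq_of_childOf_of_anc ⟨hu', hu'v⟩ ⟨hu, huv⟩ h).symm

/-- A proper descendant `w` of `v` misses the leaves below a child of `v` not above `w`. -/
theorem cluster_ne_of_anc {v w : T.V} (h : T.anc v w) (hne : w ≠ v) :
    T.cluster v ≠ T.cluster w := by
  obtain ⟨c, hc, hcw⟩ := exists_childOf_anc h hne
  obtain ⟨a, a', haa', ha, ha', hav, ha'v⟩ := T.phylo v (not_isLeaf_of_childOf hc)
  obtain ⟨d, hd, hdc⟩ : ∃ d, T.childOf d v ∧ d ≠ c := by
    by_cases hac : a = c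
    · exact ⟨a', ⟨ha', ha'v⟩, hac ▸ haa'.symm⟩
    · exact ⟨a, ⟨ha, hav⟩, hac⟩
  obtain ⟨y, hy⟩ := cluster_nonempty d
  intro hcl
  have hwy : y ∈ T.cluster w := hcl ▸ anc_trans ⟨1, hd.1⟩ hy
  rcases anc_total_of_anc (anc_trans hcw hwy) hy with hcd | hdc'
  · exact hdc (eq_of_childOf_of_anc hc hd hcd).symm
  · exact hdc (eq_of_childOf_of_anc hd hc hdc')

theorem cluster_injective : Function.Injective T.cluster := by
  intro v w hvw
  by_contra hne
  obtain ⟨x, hx⟩ := cluster_nonempty v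
  rcases anc_total_of_anc hx (show x ∈ T.cluster w from hvw ▸ hx) with h | h
  · exact cluster_ne_of_anc h (Ne.symm hne) hvw
  · exact cluster_ne_of_anc h hne hvw.symm

theorem exists_isLCA (x y : L) : ∃ w, T.isLCA x y w := by
  obtain ⟨w, ⟨hwx, hwy⟩, hmin⟩ := wellFounded_properDesc.has_min
    {u | T.anc u (T.leaf x) ∧ T.anc u (T.leaf y)} ⟨T.root, anc_root _, anc_root _⟩
  refine ⟨w, hwx, hwy, fun u hux huy => ?_⟩
  rcases anc_total_of_anc hux hwx with h | h
  · exact h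
  · by_cases huw : u = w
    · exact huw ▸ anc_refl u
    · exact absurd ⟨h, huw⟩ (hmin u ⟨hux, huy⟩)

theorem ExplainsEps.exists_label {N : Type} {lam : T.V → Finset N} {ε : L → L → Finset N}
    (hE : T.ExplainsEps lam ε) {x y : L} (hxy : x ≠ y) {k : N} (hk : k ∈ ε x y) :
    ∃ u, y ∈ T.cluster u ∧ x ∉ T.cluster u ∧ k ∈ lam u := by
  obtain ⟨w, hw⟩ := exists_isLCA (T := T) x y
  obtain ⟨u, ⟨hwu, huw, huy⟩, hku⟩ := (hE x y hxy w hw k).mp hk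
  exact ⟨u, huy, fun hux => huw (anc_antisymm (hw.2.2 u hux huy) hwu), hku⟩

section Pendant

variable {N : Type}

noncomputable def pendantLabeling (T : PhyloTree L) (f : L → Finset N) : T.V → Finset N :=
  Function.extend T.leaf f fun _ => ∅

theorem pendantLabeling_leaf (f : L → Finset N) (y : L) :
    T.pendantLabeling f (T.leaf y) = f y :=
  T.leaf_inj.extend_apply _ _ _

theorem pendantLabeling_of_not_isLeaf (f : L → Finset N) {v : T.V} (hv : ¬ T.isLeaf v) :
    T.pendantLabeling f v = ∅ :=
  Function.extend_apply' _ _ _ hv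

theorem pendantLabeling_eq_empty {f : L → Finset N} {v : T.V}
    (h : ∀ y, T.leaf y = v → f y = ∅) : T.pendantLabeling f v = ∅ := by
  by_cases hv : T.isLeaf v
  · obtain ⟨y, rfl⟩ := hv
    rw [pendantLabeling_leaf, h y rfl]
  · exact pendantLabeling_of_not_isLeaf f hv

theorem eq_leaf_of_mem_pendantLabeling {f : L → Finset N} {v : T.V} {k : N}
    (hk : k ∈ T.pendantLabeling f v) : ∃ y, T.leaf y = v ∧ k ∈ f y := by
  by_cases hv : T.isLeaf v
  · obtain ⟨y, rfl⟩ := hv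
    exact ⟨y, rfl, by rwa [pendantLabeling_leaf] at hk⟩
  · rw [pendantLabeling_of_not_isLeaf f hv] at hk
    exact absurd hk (Finset.notMem_empty k)

theorem explainsEps_pendantLabeling (f : L → Finset N) :
    T.ExplainsEps (T.pendantLabeling f) fun _ y => f y := by
  intro x y hxy w hw k
  constructor
  · intro hk
    refine ⟨T.leaf y, ⟨hw.2.1, ?_, anc_refl _⟩, by rwa [pendantLabeling_leaf]⟩
    rintro hyw
    exact hxy (T.leaf_inj (eq_of_leaf_anc (hyw ▸ hw.1)))
  · rintro ⟨u, ⟨-, -, huy⟩, hk⟩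
    obtain ⟨z, rfl, hkz⟩ := eq_leaf_of_mem_pendantLabeling hk
    rwa [T.leaf_inj (eq_of_leaf_anc huy)]

theorem condC2_pendantLabeling {f : L → Finset N}
    (hf : ∀ y z, (f y).Nonempty → (f z).Nonempty →
      T.parent (T.leaf y) = T.parent (T.leaf z) → y = z) :
    T.CondC2 (T.pendantLabeling f) := by
  intro v u u' hu hu' hlu hlu'
  obtain ⟨k, hk⟩ := Finset.nonempty_iff_ne_empty.mpr hlu
  obtain ⟨k', hk'⟩ := Finset.nonempty_iff_ne_empty.mpr hlu'
  obtain ⟨y, rfl, hky⟩ := eq_leaf_of_mem_pendantLabeling hk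
  obtain ⟨z, rfl, hkz⟩ := eq_leaf_of_mem_pendantLabeling hk'
  rw [hf y z ⟨k, hky⟩ ⟨k', hkz⟩ (hu.1.trans hu'.1.symm)]

end Pendant

def IsStar (T : PhyloTree L) : Prop := ∀ v, T.cluster v = Set.univ ∨ ∃ x, T.cluster v = {x}

namespace IsStar

theorem eq_root_of_not_isLeaf (hT : T.IsStar) {v : T.V} (hv : ¬ T.isLeaf v) : v = T.root := by
  apply cluster_injective
  rcases hT v with h | ⟨x, h⟩
  · rw [h, cluster_root]
  · exact absurd (h ▸ cluster_nontrivial hv) Set.not_nontrivial_singleton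

theorem eq_leaf_of_mem_cluster (hT : T.IsStar) {x y : L} {u : T.V} (hy : y ∈ T.cluster u)
    (hx : x ∉ T.cluster u) : u = T.leaf y := by
  by_cases hu : T.isLeaf u
  · obtain ⟨z, rfl⟩ := hu
    rw [cluster_leaf, Set.mem_singleton_iff] at hy
    rw [hy]
  · exact absurd (hT.eq_root_of_not_isLeaf hu ▸ anc_root _) hx

theorem childOf_leaf_root (hT : T.IsStar) {x y : L} (hxy : x ≠ y) :
    T.childOf (T.leaf y) T.root := by
  have hy : T.leaf y ≠ T.root := by
    intro h
    have hx : x ∈ T.cluster (T.leaf y) := by rw [h, cluster_root]; trivial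
    rw [cluster_leaf, Set.mem_singleton_iff] at hx
    exact hxy hx
  have hpy : T.parent (T.leaf y) ≠ T.leaf y := fun h => hy (eq_root_of_parent_eq h)
  exact ⟨hT.eq_root_of_not_isLeaf (not_isLeaf_of_childOf ⟨rfl, hpy.symm⟩), hy⟩

theorem not_condC2 {N : Type} (hT : T.IsStar) {lam : T.V → Finset N} {f : L → Finset N}
    (hE : T.ExplainsEps lam fun _ y => f y) {y z : L} (hyz : y ≠ z)
    (hy : (f y).Nonempty) (hz : (f z).Nonempty) : ¬ T.CondC2 lam := by
  have pendant_labeled : ∀ {x y : L}, x ≠ y → (f y).Nonempty → lam (T.leaf y) ≠ ∅ := by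
    rintro x y hxy ⟨k, hk⟩
    obtain ⟨u, huy, hux, hku⟩ := hE.exists_label hxy hk
    rw [← hT.eq_leaf_of_mem_cluster huy hux]
    exact Finset.ne_empty_of_mem hku
  intro hC2
  exact hyz (T.leaf_inj (hC2 _ _ _ (hT.childOf_leaf_root hyz.symm) (hT.childOf_leaf_root hyz)
    (pendant_labeled hyz.symm hy) (pendant_labeled hyz hz)))

end IsStar

end PhyloTree

open PhyloTree

/-- The caterpillar `(a,(b,(c,d)))`: `u = 0` is the root, `v = 1`, `w = 2`. -/
@[reducible] def caterpillar : PhyloTree (Fin 4) where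
  V := Fin 7
  fintypeV := inferInstance
  root := 0
  parent := ![0, 0, 1, 0, 1, 2, 2]
  leaf := ![3, 4, 5, 6]
  parent_root := rfl
  reach := fun v => ⟨3, by revert v; decide⟩
  leaf_inj := by decide
  leaf_iff := by decide
  phylo := by decide

/-- `(a,b,(c,d))`, the caterpillar with the edge `uv` contracted. -/
@[reducible] def caterpillarContractV : PhyloTree (Fin 4) where
  V := Fin 6
  fintypeV := inferInstance
  root := 0
  parent := ![0, 0, 0, 0, 1, 1]
  leaf := ![2, 3, 4, 5]
  parent_root := rfl
  reach := fun v => ⟨2, by revert v; decide⟩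
  leaf_inj := by decide
  leaf_iff := by decide
  phylo := by decide

/-- `(a,(b,c,d))`, the caterpillar with the edge `vw` contracted. -/
@[reducible] def caterpillarContractW : PhyloTree (Fin 4) where
  V := Fin 6
  fintypeV := inferInstance
  root := 0
  parent := ![0, 0, 0, 1, 1, 1]
  leaf := ![2, 3, 4, 5]
  parent_root := rfl
  reach := fun v => ⟨2, by revert v; decide⟩
  leaf_inj := by decide
  leaf_iff := by decide
  phylo := by decide

theorem contractEdge_caterpillar_v : ContractEdge caterpillar 1 caterpillarContractV :=
  ⟨![0, 0, 1, 2, 3, 4, 5], ⟨by decide, by decide⟩, by decide, by decide, by decide, by decide,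
    by decide⟩

theorem contractEdge_caterpillar_w : ContractEdge caterpillar 2 caterpillarContractW :=
  ⟨![0, 1, 1, 2, 3, 4, 5], ⟨by decide, by decide⟩, by decide, by decide, by decide, by decide,
    by decide⟩

def markAC : Fin 4 → Finset Unit := fun y => if y = 0 ∨ y = 2 then {()} else ∅

theorem explains_markAC (T : PhyloTree (Fin 4))
    (hac : T.parent (T.leaf 0) ≠ T.parent (T.leaf 2)) :
    T.ExplainsDelta (fun _ => ()) (fun _ _ => ()) ∧
      T.ExplainsEps (T.pendantLabeling markAC) (fun _ y => markAC y) ∧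
      T.CondC1 (fun _ => ()) (T.pendantLabeling markAC) ∅ ∧
      T.CondC2 (T.pendantLabeling markAC) := by
  refine ⟨fun _ _ _ _ _ => rfl, explainsEps_pendantLabeling _, fun _ _ _ h => h.elim,
    condC2_pendantLabeling fun y z hy hz hyz => ?_⟩
  have marked : ∀ y, (markAC y).Nonempty → y = 0 ∨ y = 2 := by decide
  rcases marked y hy with rfl | rfl <;> rcases marked z hz with rfl | rfl
  all_goals first | rfl | exact absurd hyz hac | exact absurd hyz.symm hac

theorem isStar_of_clusters_eq_caterpillar_sdiff
    {T : PhyloTree (Fin 4)} (h : T.clusters = caterpillar.clusters \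
      {caterpillar.cluster 1, caterpillar.cluster 2}) : T.IsStar := by
  intro v
  obtain ⟨⟨j, hj⟩, hj12⟩ : T.cluster v ∈ caterpillar.clusters \
      {caterpillar.cluster 1, caterpillar.cluster 2} := h ▸ ⟨v, rfl⟩
  have hj1 : j ≠ 1 := by rintro rfl; exact hj12 (Or.inl hj.symm)
  have hj2 : j ≠ 2 := by rintro rfl; exact hj12 (Or.inr hj.symm)
  have hroot_or_leaf : j = 0 ∨ caterpillar.isLeaf j := by
    clear hj hj12; revert j; decide
  rcases hroot_or_leaf with rfl | ⟨x, rfl⟩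
  · exact Or.inl (hj ▸ cluster_root)
  · exact Or.inr ⟨x, hj ▸ cluster_leaf x⟩

/-- Least-resolved trees explaining `(δ,ε)` subject to (C1)
and (C2) are not unique in general: there is a doubly labeled tree `(T,t,λ)`
explaining some `(δ,ε)` and satisfying (C1), (C2), with consecutive inner edges
`{u,v}` and `{v,w}` (`v` a child of `u`, `w` a child of `v`), equal vertex
labels `t(u)=t(v)=t(w)` and empty edge labels, a child `u'` of `u` and a child
`w'` of `w` with nonempty edge labels and all edges below `v` empty, such that
contracting either one of the two edges preserves explanation of `(δ,ε)` and
(C1),(C2), but contracting both (i.e. removing both clusters) does not. -/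
theorem statement16 :
    ∃ (L M N : Type) (δ : L → L → M) (ε : L → L → Finset N) (M0 : Set M)
      (T : PhyloTree L) (t : T.V → M) (lam : T.V → Finset N) (u v w : T.V),
      T.ExplainsDelta t δ ∧ T.ExplainsEps lam ε ∧
      T.CondC1 t lam M0 ∧ T.CondC2 lam ∧
      T.childOf v u ∧ T.childOf w v ∧
      ¬ T.isLeaf u ∧ ¬ T.isLeaf v ∧ ¬ T.isLeaf w ∧
      t u = t v ∧ t v = t w ∧ lam v = ∅ ∧ lam w = ∅ ∧
      (∃ u' : T.V, T.childOf u' u ∧ lam u' ≠ ∅) ∧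
      (∃ w' : T.V, T.childOf w' w ∧ lam w' ≠ ∅) ∧
      (∀ v' : T.V, T.childOf v' v → lam v' = ∅) ∧
      (∃ (T1 : PhyloTree L) (t1 : T1.V → M) (l1 : T1.V → Finset N),
        PhyloTree.ContractEdge T v T1 ∧ T1.ExplainsDelta t1 δ ∧
        T1.ExplainsEps l1 ε ∧ T1.CondC1 t1 l1 M0 ∧ T1.CondC2 l1) ∧
      (∃ (T2 : PhyloTree L) (t2 : T2.V → M) (l2 : T2.V → Finset N),
        PhyloTree.ContractEdge T w T2 ∧ T2.ExplainsDelta t2 δ ∧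
        T2.ExplainsEps l2 ε ∧ T2.CondC1 t2 l2 M0 ∧ T2.CondC2 l2) ∧
      ¬ ∃ (T3 : PhyloTree L) (t3 : T3.V → M) (l3 : T3.V → Finset N),
          T3.clusters = T.clusters \ {T.cluster v, T.cluster w} ∧
          T3.ExplainsDelta t3 δ ∧ T3.ExplainsEps l3 ε ∧
          T3.CondC1 t3 l3 M0 ∧ T3.CondC2 l3 := by
  obtain ⟨hδ, hε, hC1, hC2⟩ := explains_markAC caterpillar (by decide)
  have unmarked : ∀ v : caterpillar.V, (∀ y, caterpillar.leaf y = v → markAC y = ∅) →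
      caterpillar.pendantLabeling markAC v = ∅ := fun _ => pendantLabeling_eq_empty
  refine ⟨Fin 4, Unit, Unit, _, _, ∅, caterpillar, _, _, 0, 1, 2, hδ, hε, hC1, hC2,
    by decide, by decide, by decide, by decide, by decide, rfl, rfl,
    unmarked 1 (by decide), unmarked 2 (by decide),
    ⟨caterpillar.leaf 0, by decide, by rw [pendantLabeling_leaf]; decide⟩,
    ⟨caterpillar.leaf 2, by decide, by rw [pendantLabeling_leaf]; decide⟩,
    fun v' hv' => unmarked v' (by revert v'; decide),
    ⟨_, _, _, contractEdge_caterpillar_v, explains_markAC _ (by decide)⟩,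
    ⟨_, _, _, contractEdge_caterpillar_w, explains_markAC _ (by decide)⟩, ?_⟩
  rintro ⟨T3, -, l3, hclusters, -, hε3, -, hC2'⟩
  exact (isStar_of_clusters_eq_caterpillar_sdiff hclusters).not_condC2 hε3 (y := 0) (z := 2) (by decide)
    (by decide) (by decide) hC2'
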